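/- If f : I → ℂ is c-almost periodic and inf_{t∈I} |f(t)| = m > 0, then 1/f is (1/c)-almost periodic. -/

import Mathlib

/-- A set `S ⊆ ℝ` is relatively dense in `[0,∞)`: there is `l > 0` such that
every subinterval of `[0,∞)` of length `l` meets `S`. -/
def RelativelyDense (S : Set ℝ) : Prop :=
  ∃ l > 0, ∀ a : ℝ, 0 ≤ a → ∃ τ ∈ S, a ≤ τ ∧ τ ≤ a + l

/-- `f` is `c`-almost periodic on `I`. -/
def CAlmostPeriodic {E : Type*} [NormedAddCommGroup E] [NormedSpace ℂ E]
    (I : Set ℝ) (c : ℂ) (f : ℝ → E) : Prop :=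
  ∀ ε > 0, RelativelyDense {τ : ℝ | 0 < τ ∧ ∀ t ∈ I, ‖f (t + τ) - c • f t‖ ≤ ε}

/-- `f` is `c`-uniformly recurrent on `I`. -/
def CUniformlyRecurrent {E : Type*} [NormedAddCommGroup E] [NormedSpace ℂ E]
    (I : Set ℝ) (c : ℂ) (f : ℝ → E) : Prop :=
  ∃ α : ℕ → ℝ, StrictMono α ∧ (∀ n, 0 < α n) ∧
    Filter.Tendsto α Filter.atTop Filter.atTop ∧
    ∀ ε > 0, ∃ N : ℕ, ∀ n ≥ N, ∀ t ∈ I, ‖f (t + α n) - c • f t‖ ≤ ε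

theorem norm_inv_sub_inv_mul_inv {𝕜 : Type*} [NormedField 𝕜] {a b c : 𝕜}
    (ha : a ≠ 0) (hb : b ≠ 0) (hc : c ≠ 0) :
    ‖a⁻¹ - c⁻¹ * b⁻¹‖ = ‖a - c * b‖ / (‖c‖ * ‖a‖ * ‖b‖) := by
  have h : a⁻¹ - c⁻¹ * b⁻¹ = (c * b - a) / (c * a * b) := by field_simp
  rw [h, norm_div, norm_sub_rev, norm_mul, norm_mul]

theorem norm_inv_sub_inv_mul_inv_le {𝕜 : Type*} [NormedField 𝕜] {a b c : 𝕜} {m : ℝ}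
    (hm : 0 < m) (hc : ‖c‖ = 1) (ha : m ≤ ‖a‖) (hb : m ≤ ‖b‖) :
    ‖a⁻¹ - c⁻¹ * b⁻¹‖ ≤ (m ^ 2)⁻¹ * ‖a - c * b‖ := by
  have hab : m ^ 2 ≤ ‖a‖ * ‖b‖ := by nlinarith
  rw [norm_inv_sub_inv_mul_inv (norm_pos_iff.mp (hm.trans_le ha))
    (norm_pos_iff.mp (hm.trans_le hb)) (ne_zero_of_norm_ne_zero (hc ▸ one_ne_zero)),
    hc, one_mul, div_eq_inv_mul]
  gcongr

theorem RelativelyDense.mono {S T : Set ℝ} (hST : S ⊆ T) (hS : RelativelyDense S) :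
    RelativelyDense T := by
  obtain ⟨l, hl, h⟩ := hS
  refine ⟨l, hl, fun a ha => ?_⟩
  obtain ⟨τ, hτS, hτ⟩ := h a ha
  exact ⟨τ, hST hτS, hτ⟩

theorem CAlmostPeriodic.of_norm_sub_le {E F : Type*} [NormedAddCommGroup E] [NormedSpace ℂ E]
    [NormedAddCommGroup F] [NormedSpace ℂ F] {I : Set ℝ} {c d : ℂ} {f : ℝ → E} {g : ℝ → F}
    {K : ℝ} (hK : 0 < K)
    (hle : ∀ t ∈ I, ∀ τ > 0, ‖g (t + τ) - d • g t‖ ≤ K * ‖f (t + τ) - c • f t‖)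
    (hf : CAlmostPeriodic I c f) : CAlmostPeriodic I d g := by
  intro ε hε
  refine (hf (ε / K) (by positivity)).mono fun τ hτf => ⟨hτf.1, fun t ht => ?_⟩
  calc ‖g (t + τ) - d • g t‖ ≤ K * ‖f (t + τ) - c • f t‖ := hle t ht τ hτf.1
    _ ≤ K * (ε / K) := by gcongr; exact hτf.2 t ht
    _ = ε := mul_div_cancel₀ ε hK.ne'

theorem cAlmostPeriodic_inv_general (I : Set ℝ) (hI : I = Set.univ ∨ I = Set.Ici (0 : ℝ))
    (c : ℂ) (hc : ‖c‖ = 1) (f : ℝ → ℂ)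
    (m : ℝ) (hm : 0 < m) (hlow : ∀ t ∈ I, m ≤ ‖f t‖)
    (hap : CAlmostPeriodic I c f) :
    CAlmostPeriodic I c⁻¹ (fun t => (f t)⁻¹) := by
  have hshift : ∀ t ∈ I, ∀ τ > 0, t + τ ∈ I := by
    rcases hI with rfl | rfl
    · exact fun _ _ _ _ => Set.mem_univ _
    · exact fun t ht τ hτ => Set.mem_Ici.mpr (add_nonneg ht hτ.le)
  refine hap.of_norm_sub_le (K := (m ^ 2)⁻¹) (by positivity) fun t ht τ hτ => ?_
  exact norm_inv_sub_inv_mul_inv_le hm hc (hlow _ (hshift t ht τ hτ)) (hlow t ht)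

/-- the reciprocal of a c-almost periodic function bounded below in
modulus is 1/c-almost periodic. -/
theorem cAlmostPeriodic_inv (I : Set ℝ) (hI : I = Set.univ ∨ I = Set.Ici (0 : ℝ))
    (c : ℂ) (hc : ‖c‖ = 1) (f : ℝ → ℂ) (hf : Continuous f)
    (m : ℝ) (hm : 0 < m) (hlow : ∀ t ∈ I, m ≤ ‖f t‖)
    (hap : CAlmostPeriodic I c f) :
    CAlmostPeriodic I c⁻¹ (fun t => (f t)⁻¹) :=
  cAlmostPeriodic_inv_general I hI c hc f m hm hlow hap
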